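/- Let n be an odd positive integer with prime factorization n = ∏_{i=1}^{l} p_i^{s_i}, and let k ≥ 2 and c be integers. Then 𝒩_{k,c,2}(n) = ∏_{i=1}^{l} p_i^{(k−1)(s_i−1)} · 𝒩_{k,c,2}(p_i). -/

import Mathlib

/-!
By the Chinese remainder theorem the count is multiplicative in `n`, so it suffices to treat prime
powers. Let `p ∤ e` be prime and `s ≥ 1`. If `x` lifts a solution `y` modulo `p ^ s` to
`ZMod (p ^ (s + 1))`, all lifts are `x + p ^ s z` with `z ∈ (ZMod p) ^ k`. They are automatically
exceptional units, and since `(p ^ s) ^ 2 = 0` the equation `∑ (xᵢ + p ^ s zᵢ) ^ e = c` becomes a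
linear equation `∑ e yᵢ ^ (e - 1) zᵢ = b` over `ZMod p` with nonzero coefficients. It has
`p ^ (k - 1)` solutions, so each step `s → s + 1` multiplies the count by `p ^ (k - 1)`.
-/

/-- `excCount k c e n` is 𝒩_{k,c,e}(n): the number of `k`-tuples of exceptional
units of `ℤ_n` (i.e. elements `u` with both `u` and `1 - u` units) whose `e`-th
powers sum to `c` modulo `n`. -/
noncomputable def excCount (k : ℕ) (c : ℤ) (e : ℕ) (n : ℕ) : ℕ :=
  Nat.card {x : Fin k → ZMod n //
    (∀ i, IsUnit (x i) ∧ IsUnit (1 - x i)) ∧ ∑ i, (x i) ^ e = (c : ZMod n)}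

theorem add_pow_of_sq_eq_zero {R : Type*} [CommSemiring R] {a t : R} (ht : t ^ 2 = 0) (n : ℕ) :
    (a + t) ^ n = a ^ n + n * a ^ (n - 1) * t := by
  induction n with
  | zero => simp
  | succ n ih =>
    rcases n with _ | n
    · simp
    · have : (a ^ (n + 1) + (n + 1 : ℕ) * a ^ n * t) * (a + t)
          = a ^ (n + 1 + 1) + (n + 1 + 1 : ℕ) * a ^ (n + 1) * t + (n + 1) * a ^ n * t ^ 2 := by
        push_cast; ring
      rw [pow_succ, ih, Nat.add_sub_cancel, this, ht, mul_zero, add_zero, Nat.add_sub_cancel]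

theorem Nat.card_eq_mul_of_card_fiber {α β : Type*} [Finite α] [Finite β] (f : α → β) {m : ℕ}
    (hf : ∀ b, Nat.card {a // f a = b} = m) : Nat.card α = Nat.card β * m := by
  have := Fintype.ofFinite β
  rw [← Nat.card_congr (Equiv.sigmaFiberEquiv f), Nat.card_sigma]
  simp [hf]

theorem card_dotProduct_eq {F : Type*} [Field F] [Fintype F] {k : ℕ} {a : Fin k → F} {i₀ : Fin k}
    (ha : a i₀ ≠ 0) (b : F) :
    Nat.card {z : Fin k → F // a ⬝ᵥ z = b} = Fintype.card F ^ (k - 1) := by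
  set m := Nat.card {z : Fin k → F // a ⬝ᵥ z = 0}
  have hfiber (b : F) : Nat.card {z : Fin k → F // a ⬝ᵥ z = b} = m := Eq.symm <|
    Nat.card_congr <| (Equiv.addRight (Pi.single i₀ (b / a i₀))).subtypeEquiv fun z => by
      simp [dotProduct_add, dotProduct_single, mul_div_cancel₀ _ ha]
  have hcard := Nat.card_eq_mul_of_card_fiber (fun z : Fin k → F => a ⬝ᵥ z) hfiber
  rw [Nat.card_eq_fintype_card, Fintype.card_fun, Fintype.card_fin,
    Nat.card_eq_fintype_card] at hcard
  obtain ⟨j, rfl⟩ : ∃ j, k = j + 1 := ⟨k - 1, by have := i₀.pos; omega⟩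
  rw [hfiber b, Nat.add_sub_cancel]
  rw [pow_succ'] at hcard
  exact (Nat.eq_of_mul_eq_mul_left Fintype.card_pos hcard).symm

def excSolutions (R : Type*) [CommRing R] (k : ℕ) (c : ℤ) (e : ℕ) : Set (Fin k → R) :=
  {x | (∀ i, IsUnit (x i) ∧ IsUnit (1 - x i)) ∧ ∑ i, x i ^ e = c}

section excSolutions

variable {R S : Type*} [CommRing R] [CommRing S] {k : ℕ} {c : ℤ} {e : ℕ}

theorem excCount_eq_card_excSolutions (n : ℕ) :
    excCount k c e n = Nat.card (excSolutions (ZMod n) k c e) := rfl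

theorem comp_mem_excSolutions (f : R →+* S) {x : Fin k → R} (hx : x ∈ excSolutions R k c e) :
    f ∘ x ∈ excSolutions S k c e := by
  obtain ⟨hunit, hsum⟩ := hx
  refine ⟨fun i => ⟨(hunit i).1.map f, ?_⟩, ?_⟩
  · simpa using (hunit i).2.map f
  · simp [← map_pow, ← map_sum, hsum]

theorem card_excSolutions_congr (f : R ≃+* S) :
    Nat.card (excSolutions R k c e) = Nat.card (excSolutions S k c e) :=
  Nat.card_congr <| (Equiv.piCongrRight fun _ => f.toEquiv).subtypeEquiv fun _ =>
    ⟨comp_mem_excSolutions f.toRingHom, fun hx => by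
      simpa [Function.comp_def] using comp_mem_excSolutions f.symm.toRingHom hx⟩

theorem card_excSolutions_prod :
    Nat.card (excSolutions (R × S) k c e) =
      Nat.card (excSolutions R k c e) * Nat.card (excSolutions S k c e) := by
  rw [← Nat.card_prod, ← Nat.card_congr (Equiv.Set.prod _ _)]
  refine Nat.card_congr <| (Equiv.arrowProdEquivProdArrow _ _ _).subtypeEquiv fun x => ?_
  simp only [excSolutions, Set.mem_prod, Set.mem_ofPred_eq, Prod.isUnit_iff, Prod.ext_iff,
    Prod.fst_sum, Prod.snd_sum, forall_and, Prod.fst_sub, Prod.fst_one, Prod.snd_sub,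
    Prod.snd_one, Prod.pow_fst, Prod.fst_intCast, Prod.pow_snd, Prod.snd_intCast,
    Equiv.arrowProdEquivProdArrow, Equiv.coe_fn_mk]
  tauto

end excSolutions

theorem excCount_mul (k : ℕ) (c : ℤ) (e : ℕ) {m n : ℕ} (h : m.Coprime n) :
    excCount k c e (m * n) = excCount k c e m * excCount k c e n := by
  simp only [excCount_eq_card_excSolutions, card_excSolutions_congr (ZMod.chineseRemainder h),
    card_excSolutions_prod]

theorem excCount_one (k : ℕ) (c : ℤ) (e : ℕ) : excCount k c e 1 = 1 := by
  rw [excCount_eq_card_excSolutions, Nat.card_eq_one_iff_unique]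
  exact ⟨inferInstance, ⟨⟨0, fun _ => ⟨isUnit_of_subsingleton _, isUnit_of_subsingleton _⟩,
    Subsingleton.elim _ _⟩⟩⟩

namespace ZMod

variable {p s : ℕ}

variable (p s) in
abbrev toPrime : ZMod (p ^ (s + 1)) →+* ZMod p := castHom (dvd_pow_self p s.succ_ne_zero) _

variable (p s) in
abbrev toPow : ZMod (p ^ (s + 1)) →+* ZMod (p ^ s) := castHom (pow_dvd_pow p s.le_succ) _

variable (p s) in
theorem toPrime_surjective : Function.Surjective (toPrime p s) :=
  castHom_surjective _

theorem isUnit_of_isUnit_toPow [NeZero p] (hs : s ≠ 0) {u : ZMod (p ^ (s + 1))}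
    (hu : IsUnit (toPow p s u)) : IsUnit u := by
  obtain ⟨v, rfl⟩ := natCast_zmod_surjective u
  rw [map_natCast, isUnit_iff_coprime, Nat.coprime_pow_right_iff (Nat.pos_of_ne_zero hs)] at hu
  rw [isUnit_iff_coprime, Nat.coprime_pow_right_iff s.succ_pos]
  exact hu

variable (p s) in
/-- `z ↦ p ^ s * z`: the residue modulo `p ^ (s + 1)` whose top base-`p` digit is `z` and whose
other digits vanish. -/
def topDigit : ZMod p →+ ZMod (p ^ (s + 1)) :=
  lift p ⟨(AddMonoidHom.mulLeft ((p : ZMod (p ^ (s + 1))) ^ s)).comp (Int.castAddHom _), by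
    show (p : ZMod (p ^ (s + 1))) ^ s * ((p : ℤ) : ZMod (p ^ (s + 1))) = 0
    rw [Int.cast_natCast, ← pow_succ, ← Nat.cast_pow, natCast_self]⟩

theorem topDigit_toPrime (u : ZMod (p ^ (s + 1))) : topDigit p s (toPrime p s u) = p ^ s * u := by
  obtain ⟨v, rfl⟩ := intCast_surjective u
  rw [map_intCast, topDigit, lift_coe]
  rfl

theorem topDigit_injective [NeZero p] : Function.Injective (topDigit p s) := by
  refine (injective_iff_map_eq_zero _).mpr fun z hz => ?_
  obtain ⟨v, rfl⟩ := toPrime_surjective p s z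
  rw [topDigit_toPrime] at hz
  obtain ⟨v, rfl⟩ := intCast_surjective v
  rw [map_intCast, intCast_zmod_eq_zero_iff_dvd]
  rw [← Int.cast_natCast, ← Int.cast_pow, ← Int.cast_mul, intCast_zmod_eq_zero_iff_dvd,
    Nat.cast_pow, pow_succ] at hz
  exact (mul_dvd_mul_iff_left (pow_ne_zero _ (Int.natCast_ne_zero.mpr (NeZero.ne p)))).mp hz

theorem toPow_topDigit (z : ZMod p) : toPow p s (topDigit p s z) = 0 := by
  obtain ⟨u, rfl⟩ := toPrime_surjective p s z
  rw [topDigit_toPrime, map_mul, map_pow, map_natCast, ← Nat.cast_pow, natCast_self, zero_mul]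

theorem exists_topDigit_eq_of_toPow_eq_zero {v : ZMod (p ^ (s + 1))} (hv : toPow p s v = 0) :
    ∃ z, topDigit p s z = v := by
  obtain ⟨w, rfl⟩ := intCast_surjective v
  rw [map_intCast, intCast_zmod_eq_zero_iff_dvd] at hv
  obtain ⟨m, rfl⟩ := hv
  exact ⟨toPrime p s m, by rw [topDigit_toPrime]; push_cast; rfl⟩

theorem mul_topDigit (u : ZMod (p ^ (s + 1))) (z : ZMod p) :
    u * topDigit p s z = topDigit p s (toPrime p s u * z) := by
  obtain ⟨w, rfl⟩ := toPrime_surjective p s z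
  rw [← map_mul, topDigit_toPrime, topDigit_toPrime, mul_left_comm]

theorem topDigit_mul_topDigit (hs : s ≠ 0) (z w : ZMod p) :
    topDigit p s z * topDigit p s w = 0 := by
  obtain ⟨u, rfl⟩ := toPrime_surjective p s z
  rw [mul_topDigit, topDigit_toPrime, map_mul (toPrime p s), map_pow, map_natCast, natCast_self,
    zero_pow hs, zero_mul, zero_mul, map_zero]

variable {k : ℕ} {c : ℤ} {e : ℕ}

theorem sum_pow_add_topDigit (hs : s ≠ 0) (x : Fin k → ZMod (p ^ (s + 1))) (z : Fin k → ZMod p) :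
    ∑ i, (x i + topDigit p s (z i)) ^ e =
      ∑ i, x i ^ e + topDigit p s ((fun i => e * toPrime p s (x i) ^ (e - 1)) ⬝ᵥ z) := by
  simp only [add_pow_of_sq_eq_zero (sq (topDigit p s _) ▸ topDigit_mul_topDigit hs _ _),
    mul_topDigit, Finset.sum_add_distrib, dotProduct, map_sum, map_mul, map_pow, map_natCast]

theorem mem_excSolutions_iff_of_toPow [NeZero p] (hs : s ≠ 0) {x : Fin k → ZMod (p ^ (s + 1))}
    (hx : toPow p s ∘ x ∈ excSolutions (ZMod (p ^ s)) k c e) :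
    x ∈ excSolutions (ZMod (p ^ (s + 1))) k c e ↔ ∑ i, x i ^ e = c := by
  refine ⟨And.right, fun hsum => ⟨fun i => ⟨?_, ?_⟩, hsum⟩⟩
  · exact isUnit_of_isUnit_toPow hs (hx.1 i).1
  · refine isUnit_of_isUnit_toPow hs ?_
    rw [map_sub, map_one]
    exact (hx.1 i).2

theorem card_fiber_toPow [Fact p.Prime] (hs : s ≠ 0) (he : ¬ p ∣ e) (hk : 0 < k)
    {y : Fin k → ZMod (p ^ s)} (hy : y ∈ excSolutions (ZMod (p ^ s)) k c e) :
    Nat.card {x : excSolutions (ZMod (p ^ (s + 1))) k c e // toPow p s ∘ x.1 = y} =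
      p ^ (k - 1) := by
  obtain ⟨x₀, rfl⟩ := (castHom_surjective (pow_dvd_pow p s.le_succ)).comp_left y
  obtain ⟨b, hb⟩ : ∃ b, topDigit p s b = c - ∑ i, x₀ i ^ e := by
    refine exists_topDigit_eq_of_toPow_eq_zero ?_
    rw [map_sub, map_intCast, map_sum, sub_eq_zero, ← hy.2]
    simp only [map_pow, Function.comp_apply]
  set a : Fin k → ZMod p := fun i => e * toPrime p s (x₀ i) ^ (e - 1)
  have ha : a ⟨0, hk⟩ ≠ 0 := by
    refine mul_ne_zero (by simpa [natCast_eq_zero_iff] using he) (pow_ne_zero _ ?_)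
    exact ((isUnit_of_isUnit_toPow hs (hy.1 _).1).map _).ne_zero
  have hsum (z : Fin k → ZMod p) : ∑ i, (x₀ i + topDigit p s (z i)) ^ e = c ↔ a ⬝ᵥ z = b := by
    rw [sum_pow_add_topDigit hs, ← eq_sub_iff_add_eq', ← hb, topDigit_injective.eq_iff]
  have hfiber (z : Fin k → ZMod p) : toPow p s ∘ (x₀ + topDigit p s ∘ z) = toPow p s ∘ x₀ := by
    funext i
    simp only [Function.comp_apply, Pi.add_apply, map_add, toPow_topDigit, add_zero]
  refine Eq.trans ?_ ((card_dotProduct_eq ha b).trans (by rw [ZMod.card]))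
  refine (Nat.card_eq_of_bijective (fun z => ⟨⟨x₀ + topDigit p s ∘ z.1,
    (mem_excSolutions_iff_of_toPow hs (hfiber z.1 ▸ hy)).mpr ((hsum z.1).mpr z.2)⟩, hfiber z.1⟩)
    ⟨fun z w hzw => ?_, ?_⟩).symm
  · have := congrFun (congrArg (fun x => x.1.1) hzw)
    exact Subtype.ext <| funext fun i => topDigit_injective (add_left_cancel (this i))
  · rintro ⟨⟨x, hx⟩, hxy⟩
    choose z hz using fun i => exists_topDigit_eq_of_toPow_eq_zero (v := x i - x₀ i)
      (by rw [map_sub, sub_eq_zero]; exact congrFun hxy i)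
    obtain rfl : x₀ + topDigit p s ∘ z = x := funext fun i => by simp [hz i]
    exact ⟨⟨z, (hsum z).mp hx.2⟩, rfl⟩

end ZMod

theorem excCount_pow_succ {p s k e : ℕ} [Fact p.Prime] {c : ℤ} (hs : s ≠ 0) (he : ¬ p ∣ e)
    (hk : 0 < k) : excCount k c e (p ^ (s + 1)) = p ^ (k - 1) * excCount k c e (p ^ s) := by
  rw [excCount_eq_card_excSolutions, excCount_eq_card_excSolutions, mul_comm]
  refine Nat.card_eq_mul_of_card_fiber
    (fun x => ⟨ZMod.toPow p s ∘ x.1, comp_mem_excSolutions _ x.2⟩) fun y => ?_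
  rw [← ZMod.card_fiber_toPow hs he hk y.2]
  exact Nat.card_congr (Equiv.subtypeEquivRight fun x => Subtype.ext_iff)

theorem excCount_prime_pow {p k e s : ℕ} {c : ℤ} (hp : p.Prime) (he : ¬ p ∣ e) (hk : 0 < k)
    (hs : s ≠ 0) : excCount k c e (p ^ s) = p ^ ((k - 1) * (s - 1)) * excCount k c e p := by
  have := Fact.mk hp
  induction s, Nat.one_le_iff_ne_zero.mpr hs using Nat.le_induction with
  | base => simp
  | succ s hs₁ ih =>
    rw [excCount_pow_succ (by omega) he hk, ih (by omega), ← mul_assoc, ← pow_add]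
    congr 2
    rw [Nat.add_sub_cancel, add_comm, ← Nat.mul_add_one, Nat.sub_add_cancel hs₁]

theorem excCount_odd_factorization_general (n : ℕ) (hodd : Odd n)
    (k : ℕ) (hk : 2 ≤ k) (c : ℤ) :
    excCount k c 2 n =
      ∏ p ∈ n.primeFactors,
        p ^ ((k - 1) * (n.factorization p - 1)) * excCount k c 2 p := by
  rw [Nat.multiplicative_factorization _ (fun _ _ => excCount_mul k c 2) (excCount_one k c 2)
    hodd.pos.ne', Finsupp.prod, Nat.support_factorization]
  refine Finset.prod_congr rfl fun p hp => ?_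
  obtain ⟨hp, hpn, -⟩ := Nat.mem_primeFactors.mp hp
  have hp2 : ¬ p ∣ 2 := fun h2 =>
    hodd.not_two_dvd_nat ((Nat.prime_dvd_prime_iff_eq hp Nat.prime_two).mp h2 ▸ hpn)
  exact excCount_prime_pow hp hp2 (by omega) (hp.factorization_pos_of_dvd hodd.pos.ne' hpn).ne'

theorem excCount_odd_factorization (n : ℕ) (hn : 0 < n) (hodd : Odd n)
    (k : ℕ) (hk : 2 ≤ k) (c : ℤ) :
    excCount k c 2 n =
      ∏ p ∈ n.primeFactors,
        p ^ ((k - 1) * (n.factorization p - 1)) * excCount k c 2 p :=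
  excCount_odd_factorization_general n hodd k hk c
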